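/- Let H be a graph of minimum degree 3, let (G,γ) be a signed graph, and let G' be the graph obtained from G by subdividing every even edge exactly once. Then (G,γ) contains (H,γ₁) as a signed graph minor if and only if G' contains H as an odd-minor. -/

import Mathlib

namespace TDMPaper

/-- A finite multigraph without loops: edges carry their unordered pair of endpoints. -/
structure MGraph where
  V : Type
  E : Type
  finV : Finite V
  finE : Finite E
  ends : E → Sym2 V
  loopless : ∀ e, ¬ (ends e).IsDiag

attribute [instance] MGraph.finV MGraph.finE

namespace MGraph

/-- A cycle in a multigraph, given by cyclically ordered distinct vertices and
distinct edges. -/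
structure Cycle (G : MGraph) where
  n : ℕ
  npos : 0 < n
  vtx : Fin n → G.V
  edge : Fin n → G.E
  vtx_inj : Function.Injective vtx
  edge_inj : Function.Injective edge
  ends_eq : ∀ i : Fin n,
    G.ends (edge i) = s(vtx i, vtx ⟨(i.1 + 1) % n, Nat.mod_lt _ npos⟩)

/-- The parity of a cycle with respect to a signing `γ`. -/
def Cycle.parity {G : MGraph} (C : G.Cycle) (γ : G.E → ZMod 2) : ZMod 2 :=
  ∑ i, γ (C.edge i)

/-- The vertex set of a cycle. -/
def Cycle.support {G : MGraph} (C : G.Cycle) : Set G.V := Set.range C.vtx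

/-- The odd cycle packing number of a signed graph: the maximum number of pairwise
vertex-disjoint odd cycles. -/
noncomputable def OCP (G : MGraph) (γ : G.E → ZMod 2) : ℕ :=
  sSup {k : ℕ | ∃ C : Fin k → G.Cycle,
    (∀ i, (C i).parity γ = 1) ∧
    ∀ i j, i ≠ j → Disjoint ((C i).support) ((C j).support)}

/-- The subgraph induced by a vertex set `S` (kept on the same vertex type; only
edges with both endpoints in `S` survive). -/
def induce (G : MGraph) (S : Set G.V) : MGraph where
  V := G.V
  E := {e : G.E // ∀ v ∈ G.ends e, v ∈ S}
  finV := G.finV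
  finE := inferInstance
  ends := fun e => G.ends e.1
  loopless := fun e => G.loopless e.1

/-- The odd cycle packing number of the subgraph induced on `S`, signs inherited. -/
noncomputable def OCPOn (G : MGraph) (γ : G.E → ZMod 2) (S : Set G.V) : ℕ :=
  (G.induce S).OCP (fun e => γ e.1)

/-- A path in a multigraph. -/
structure Path (G : MGraph) where
  n : ℕ
  vtx : Fin (n + 1) → G.V
  edge : Fin n → G.E
  vtx_inj : Function.Injective vtx
  ends_eq : ∀ i : Fin n, G.ends (edge i) = s(vtx i.castSucc, vtx i.succ)

def Path.first {G : MGraph} (P : G.Path) : G.V := P.vtx 0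
def Path.last {G : MGraph} (P : G.Path) : G.V := P.vtx (Fin.last P.n)
def Path.support {G : MGraph} (P : G.Path) : Set G.V := Set.range P.vtx
def Path.internals {G : MGraph} (P : G.Path) : Set G.V :=
  P.support \ {P.first, P.last}
def Path.parity {G : MGraph} (P : G.Path) (γ : G.E → ZMod 2) : ZMod 2 :=
  ∑ i, γ (P.edge i)

end MGraph

open MGraph

/-- `γ'` is obtained from `γ` by a sequence of shiftings at vertices. -/
def IsShift (G : MGraph) (γ γ' : G.E → ZMod 2) : Prop :=
  ∃ σ : G.V → ZMod 2, ∀ e u v, G.ends e = s(u, v) → γ' e = γ e + σ u + σ v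

/-- A minor model of `H` in `G`: disjoint nonempty connected branch sets and an
injective assignment of edges. -/
structure MinorModel (H G : MGraph) where
  bs : H.V → Set G.V
  em : H.E → G.E
  bs_nonempty : ∀ v, (bs v).Nonempty
  bs_disjoint : ∀ u v, u ≠ v → Disjoint (bs u) (bs v)
  bs_connected : ∀ v, ∀ a ∈ bs v, ∀ b ∈ bs v,
    Relation.ReflTransGen
      (fun x y => x ∈ bs v ∧ y ∈ bs v ∧ ∃ e, G.ends e = s(x, y)) a b
  em_inj : Function.Injective em
  em_ends : ∀ eH u v, H.ends eH = s(u, v) →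
    ∃ a ∈ bs u, ∃ b ∈ bs v, G.ends (em eH) = s(a, b)

/-- `H` is a minor of `G`. -/
def IsMinor (H G : MGraph) : Prop := Nonempty (MinorModel H G)

/-- `(H,KH)` is a rooted minor of `(G,KG)`: there is a minor model in which the
branch set of every root of `H` contains a root of `G`. -/
def IsRootedMinor (H : MGraph) (KH : Set H.V) (G : MGraph) (KG : Set G.V) : Prop :=
  ∃ M : MinorModel H G, ∀ v ∈ KH, (M.bs v ∩ KG).Nonempty

/-- A signed minor model of `(H,γH)` in `(G,γG)`: after shifting, branch sets are
connected through even edges and edges of `H` get edges of `G` of the correct sign. -/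
structure SignedMinorModel (H G : MGraph) (γH : H.E → ZMod 2) (γG : G.E → ZMod 2) where
  γ' : G.E → ZMod 2
  shift : IsShift G γG γ'
  bs : H.V → Set G.V
  em : H.E → G.E
  bs_nonempty : ∀ v, (bs v).Nonempty
  bs_disjoint : ∀ u v, u ≠ v → Disjoint (bs u) (bs v)
  bs_connected : ∀ v, ∀ a ∈ bs v, ∀ b ∈ bs v,
    Relation.ReflTransGen
      (fun x y => x ∈ bs v ∧ y ∈ bs v ∧ ∃ e, γ' e = 0 ∧ G.ends e = s(x, y)) a b
  em_inj : Function.Injective em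
  em_ends : ∀ eH u v, H.ends eH = s(u, v) →
    ∃ a ∈ bs u, ∃ b ∈ bs v, G.ends (em eH) = s(a, b)
  em_parity : ∀ eH, γ' (em eH) = γH eH

/-- `(H,γH)` is a signed graph minor of `(G,γG)`. -/
def IsSignedMinor (H : MGraph) (γH : H.E → ZMod 2) (G : MGraph)
    (γG : G.E → ZMod 2) : Prop :=
  Nonempty (SignedMinorModel H G γH γG)

/-- `(H,γH,KH)` is a rooted signed graph minor of `(G,γG,KG)`. -/
def IsRootedSignedMinor (H : MGraph) (γH : H.E → ZMod 2) (KH : Set H.V)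
    (G : MGraph) (γG : G.E → ZMod 2) (KG : Set G.V) : Prop :=
  ∃ M : SignedMinorModel H G γH γG, ∀ v ∈ KH, (M.bs v ∩ KG).Nonempty

/-- An odd minor model of `H` in `G`: a minor model together with a 2-colouring of
`G` which is proper on each branch set (branch sets are connected through
bichromatic edges) and for which every model edge is monochromatic. -/
structure OddMinorModel (H G : MGraph) where
  bs : H.V → Set G.V
  em : H.E → G.E
  col : G.V → ZMod 2
  bs_nonempty : ∀ v, (bs v).Nonempty
  bs_disjoint : ∀ u v, u ≠ v → Disjoint (bs u) (bs v)
  bs_connected : ∀ v, ∀ a ∈ bs v, ∀ b ∈ bs v,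
    Relation.ReflTransGen
      (fun x y => x ∈ bs v ∧ y ∈ bs v ∧ col x ≠ col y ∧ ∃ e, G.ends e = s(x, y)) a b
  em_inj : Function.Injective em
  em_ends : ∀ eH u v, H.ends eH = s(u, v) →
    ∃ a ∈ bs u, ∃ b ∈ bs v, G.ends (em eH) = s(a, b)
  em_mono : ∀ eH u v, G.ends (em eH) = s(u, v) → col u = col v

/-- `G` contains `H` as an odd-minor. -/
def IsOddMinor (H G : MGraph) : Prop := Nonempty (OddMinorModel H G)

/-- `(G,γG)` contains `(H,γH)` as a subdivision. -/
def IsSignedSubdivision (H : MGraph) (γH : H.E → ZMod 2) (G : MGraph)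
    (γG : G.E → ZMod 2) : Prop :=
  ∃ (γH' : H.E → ZMod 2) (_ : IsShift H γH γH')
    (φV : H.V → G.V) (φE : H.E → G.Path),
    Function.Injective φV ∧
    (∀ eH u v, H.ends eH = s(u, v) →
      s((φE eH).first, (φE eH).last) = s(φV u, φV v)) ∧
    (∀ eH, (φE eH).parity γG = γH' eH) ∧
    (∀ e e', e ≠ e' → Disjoint ((φE e).internals) ((φE e').support)) ∧
    (∀ e, Disjoint ((φE e).internals) (Set.range φV))

/-! ## Tree decompositions and width parameters -/

/-- A tree decomposition of a multigraph. -/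
structure TreeDecomp (G : MGraph) where
  ι : Type
  tree : SimpleGraph ι
  isTree : tree.IsTree
  bag : ι → Set G.V
  covers_vertex : ∀ v, ∃ t, v ∈ bag t
  covers_edge : ∀ e, ∃ t, ∀ v ∈ G.ends e, v ∈ bag t
  bag_connected : ∀ v, (tree.induce {t | v ∈ bag t}).Connected

/-- A node of a tree is a leaf if it has at most one neighbour. -/
def IsLeaf {ι : Type} (T : SimpleGraph ι) (t : ι) : Prop :=
  (T.neighborSet t).Subsingleton

/-- A tree `K`-free-decomposition. -/
structure KFreeDecomp (G : MGraph) (K : Set G.V) extends TreeDecomp G where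
  L : Set G.V
  L_disj : Disjoint L K
  unique_bag : ∀ v ∈ L, ∃! t, v ∈ bag t
  leaf_bag : ∀ v ∈ L, ∀ t, v ∈ bag t → IsLeaf tree t

/-- The width of a tree `K`-free-decomposition: `max {0, max_t |β(t)\L| - 1}`. -/
noncomputable def KFreeDecomp.width {G : MGraph} {K : Set G.V}
    (D : KFreeDecomp G K) : ℕ :=
  ⨆ t : D.ι, ((D.bag t \ D.L).ncard - 1)

/-- The `K`-free treewidth of `(G,K)`. -/
noncomputable def twK (G : MGraph) (K : Set G.V) : ℕ :=
  sInf {w | ∃ D : KFreeDecomp G K, D.width = w}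

/-- A tame OCP-tree-decomposition of a signed graph. -/
structure TameOCPDecomp (G : MGraph) (γ : G.E → ZMod 2) extends TreeDecomp G where
  prot : ι → Set G.V
  prot_sub : ∀ t, prot t ⊆ bag t
  prot_adh : ∀ t t', tree.Adj t t' → ((bag t ∩ bag t') \ prot t).ncard ≤ 1

/-- The tame width (t-width) of a tame OCP-tree-decomposition. -/
noncomputable def TameOCPDecomp.twidth {G : MGraph} {γ : G.E → ZMod 2}
    (D : TameOCPDecomp G γ) : ℕ :=
  ⨆ t : D.ι, ((D.prot t).ncard + G.OCPOn γ (D.bag t \ D.prot t))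

/-- The tame OCP-treewidth of a signed graph. -/
noncomputable def tOCPtw (G : MGraph) (γ : G.E → ZMod 2) : ℕ :=
  sInf {w | ∃ D : TameOCPDecomp G γ, D.twidth = w}

/-- A TDM-tree-decomposition of a rooted signed graph. -/
structure TDMDecomp (G : MGraph) (γ : G.E → ZMod 2) (K : Set G.V)
    extends TreeDecomp G where
  prot : ι → Set G.V
  J : Set ι
  J_subtree : J.Nonempty → (tree.induce J).Connected
  prot_sub : ∀ t, prot t ⊆ bag t
  prot_roots : ∀ t, K ∩ bag t ⊆ prot t
  prot_adh : ∀ t t', tree.Adj t t' → ((bag t ∩ bag t') \ prot t).ncard ≤ 1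
  strong : ∀ t ∈ J, ∀ t', tree.Adj t t' → bag t ∩ bag t' ⊆ prot t
  roots_in_J : K ⊆ ⋃ j ∈ J, bag j

/-- The width of a TDM-tree-decomposition. -/
noncomputable def TDMDecomp.width {G : MGraph} {γ : G.E → ZMod 2} {K : Set G.V}
    (D : TDMDecomp G γ K) : ℕ :=
  ⨆ t : D.ι, ((D.prot t).ncard + G.OCPOn γ (D.bag t \ D.prot t))

/-- The TDM-treewidth of a rooted signed graph. -/
noncomputable def TDMtw (G : MGraph) (γ : G.E → ZMod 2) (K : Set G.V) : ℕ :=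
  sInf {w | ∃ D : TDMDecomp G γ K, D.width = w}

/-! ## Grids, parity handles, parity vortices -/

/-- Adjacency of the grid, on `ℕ × ℕ` coordinates. -/
def gridAdj (a b : ℕ × ℕ) : Prop :=
  (a.1 = b.1 ∧ (a.2 + 1 = b.2 ∨ b.2 + 1 = a.2)) ∨
  (a.2 = b.2 ∧ (a.1 + 1 = b.1 ∨ b.1 + 1 = a.1))

/-- The `k × k` grid. -/
def gridGraph (k : ℕ) : MGraph where
  V := Fin k × Fin k
  E := {e : Sym2 (Fin k × Fin k) //
    ∃ a b : Fin k × Fin k, gridAdj (a.1.1, a.2.1) (b.1.1, b.2.1) ∧ e = s(a, b)}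
  finV := inferInstance
  finE := inferInstance
  ends := Subtype.val
  loopless := fun e he => by
    obtain ⟨a, b, hab, h⟩ := e.2
    rw [h, Sym2.mk_isDiag_iff] at he
    subst he
    rcases hab with ⟨_, h' | h'⟩ | ⟨_, h' | h'⟩ <;> omega

/-- The first row of the `k × k` grid. -/
def firstRow (k : ℕ) : Set (gridGraph k).V := {p : Fin k × Fin k | p.1.1 = 0}

/-- The `i`-th designated vertex `x_i` on the outer face of the cylindrical
`(k × 4k)`-grid (every other vertex, `0`-indexed). -/
def xvtx (k : ℕ) (i : Fin (2 * k)) : Fin k × Fin (4 * k) :=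
  (⟨0, by have := i.2; omega⟩, ⟨2 * i.1, by have := i.2; omega⟩)

/-- Adjacency of the cylindrical `(k × 4k)`-grid `P_k □ C_{4k}`. -/
def cylAdj (k : ℕ) (a b : Fin k × Fin (4 * k)) : Prop :=
  (a.1 = b.1 ∧ (a.2.1 + 1 = b.2.1 ∨ b.2.1 + 1 = a.2.1 ∨
    (a.2.1 = 0 ∧ b.2.1 + 1 = 4 * k) ∨ (b.2.1 = 0 ∧ a.2.1 + 1 = 4 * k))) ∨
  (a.2 = b.2 ∧ (a.1.1 + 1 = b.1.1 ∨ b.1.1 + 1 = a.1.1))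

/-- The chords `x_i x_{2k-i+1}` of the parity handle. -/
def handleChord (k : ℕ) (e : Sym2 (Fin k × Fin (4 * k))) : Prop :=
  ∃ i : Fin k, e = s(xvtx k ⟨i.1, by have := i.2; omega⟩,
    xvtx k ⟨2 * k - 1 - i.1, by have := i.2; omega⟩)

/-- The chords `x_{2i-1} x_{2i}` of the parity vortex. -/
def vortexChord (k : ℕ) (e : Sym2 (Fin k × Fin (4 * k))) : Prop :=
  ∃ i : Fin k, e = s(xvtx k ⟨2 * i.1, by have := i.2; omega⟩,
    xvtx k ⟨2 * i.1 + 1, by have := i.2; omega⟩)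

lemma xvtx_ne (k : ℕ) (i j : Fin (2 * k)) (h : i.1 ≠ j.1) : xvtx k i ≠ xvtx k j := by
  intro hc
  have := congrArg (fun p => p.2.1) hc
  simp only [xvtx] at this
  omega

/-- The unsigned, unrooted parity handle `H_k`. -/
def handleGraph (k : ℕ) : MGraph where
  V := Fin k × Fin (4 * k)
  E := {e : Sym2 (Fin k × Fin (4 * k)) //
    (∃ a b, cylAdj k a b ∧ e = s(a, b)) ∨ handleChord k e}
  finV := inferInstance
  finE := inferInstance
  ends := Subtype.val
  loopless := fun e he => by
    rcases e.2 with ⟨a, b, hab, h⟩ | ⟨i, h⟩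
    · rw [h, Sym2.mk_isDiag_iff] at he
      subst he
      have h1 := a.1.2
      have h2 := a.2.2
      rcases hab with ⟨_, h' | h' | ⟨h', h''⟩ | ⟨h', h''⟩⟩ | ⟨_, h' | h'⟩ <;> omega
    · rw [h, Sym2.mk_isDiag_iff] at he
      have := i.2
      exact xvtx_ne k _ _ (show (i.1 : ℕ) ≠ 2 * k - 1 - i.1 by omega) he

/-- The unsigned, unrooted parity vortex `V_k`. -/
def vortexGraph (k : ℕ) : MGraph where
  V := Fin k × Fin (4 * k)
  E := {e : Sym2 (Fin k × Fin (4 * k)) //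
    (∃ a b, cylAdj k a b ∧ e = s(a, b)) ∨ vortexChord k e}
  finV := inferInstance
  finE := inferInstance
  ends := Subtype.val
  loopless := fun e he => by
    rcases e.2 with ⟨a, b, hab, h⟩ | ⟨i, h⟩
    · rw [h, Sym2.mk_isDiag_iff] at he
      subst he
      have h1 := a.1.2
      have h2 := a.2.2
      rcases hab with ⟨_, h' | h' | ⟨h', h''⟩ | ⟨h', h''⟩⟩ | ⟨_, h' | h'⟩ <;> omega
    · rw [h, Sym2.mk_isDiag_iff] at he
      have := i.2
      exact xvtx_ne k _ _ (show (2 * i.1 : ℕ) ≠ 2 * i.1 + 1 by omega) he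

/-- The all-zero signing. -/
def γ₀ (G : MGraph) : G.E → ZMod 2 := fun _ => 0

/-- The all-one signing. -/
def γ₁ (G : MGraph) : G.E → ZMod 2 := fun _ => 1

/-! ## Matrices with two nonzero entries per row -/

/-- `A` has exactly two nonzero entries in every row. -/
def TwoNonzeroPerRow {m n : ℕ} (A : Matrix (Fin m) (Fin n) ℤ) : Prop :=
  ∀ i, {j | A i j ≠ 0}.ncard = 2

/-- The graph `G(A)` of a matrix with exactly two nonzero entries per row:
vertices are columns, edges are rows, each row joining its two nonzero columns. -/
noncomputable def matrixGraph {m n : ℕ} (A : Matrix (Fin m) (Fin n) ℤ)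
    (h : TwoNonzeroPerRow A) : MGraph where
  V := Fin n
  E := Fin m
  finV := inferInstance
  finE := inferInstance
  ends := fun i => s((Set.ncard_eq_two.mp (h i)).choose,
    (Set.ncard_eq_two.mp (h i)).choose_spec.choose)
  loopless := fun i hi => by
    rw [Sym2.mk_isDiag_iff] at hi
    exact (Set.ncard_eq_two.mp (h i)).choose_spec.choose_spec.1 hi

/-- The signing of `G(A)`: a row is even iff its two nonzero entries have
different signs (i.e. the product of its nonzero entries is negative). -/
def matrixSign {m n : ℕ} (A : Matrix (Fin m) (Fin n) ℤ) : Fin m → ZMod 2 :=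
  fun i => if (∏ j ∈ Finset.univ.filter (fun j => A i j ≠ 0), A i j) < 0 then 0 else 1

/-- The roots of `G⁺_•(A)`: columns containing an entry outside `{-1,0,1}`. -/
def matrixRoots {m n : ℕ} (A : Matrix (Fin m) (Fin n) ℤ) : Set (Fin n) :=
  {j | ∃ i, 1 < (A i j).natAbs}

/-- The TDM-treewidth of the rooted signed graph `G⁺_•(A)` associated to `A`. -/
noncomputable def matrixTDMtw {m n : ℕ} (A : Matrix (Fin m) (Fin n) ℤ)
    (h : TwoNonzeroPerRow A) : ℕ :=
  TDMtw (matrixGraph A h) (fun e => matrixSign A e) (fun j => matrixRoots A j)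

/-- The largest absolute value of an entry of `A`. -/
def maxAbsEntry {m n : ℕ} (A : Matrix (Fin m) (Fin n) ℤ) : ℕ :=
  Finset.sup Finset.univ fun i => Finset.sup Finset.univ fun j => (A i j).natAbs

/-- `A` is totally `Δ`-modular: every square subdeterminant has absolute value at
most `Δ`. -/
def TotallyDeltaModular {m n : ℕ} (A : Matrix (Fin m) (Fin n) ℤ) (Δ : ℕ) : Prop :=
  ∀ (s : ℕ) (r : Fin s → Fin m) (c : Fin s → Fin n),
    Function.Injective r → Function.Injective c →
    ((A.submatrix r c).det).natAbs ≤ Δ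

/-- The set of objective values of feasible points of the integer program
`max { wᵀx : Ax ≤ b, ℓ ≤ x ≤ u, x integral }`. -/
def IPvalues {m n : ℕ} (A : Matrix (Fin m) (Fin n) ℤ) (b : Fin m → ℤ)
    (w ℓ u : Fin n → ℤ) : Set ℤ :=
  {y | ∃ x : Fin n → ℤ, (∀ i, ∑ j, A i j * x j ≤ b i) ∧
    (∀ j, ℓ j ≤ x j ∧ x j ≤ u j) ∧ y = ∑ j, w j * x j}

/-- `o` solves the maximization problem over `S`: it is `none` iff `S` is
infeasible, and otherwise it is the maximum value. -/
def SolvesIP (o : Option ℤ) (S : Set ℤ) : Prop :=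
  (o = none ∧ S = ∅) ∨ ∃ y, o = some y ∧ IsGreatest S y


lemma exists_pair {α : Type} (z : Sym2 α) : ∃ p : α × α, z = s(p.1, p.2) :=
  Sym2.ind (fun a b => ⟨(a, b), rfl⟩) z

/-- A chosen first endpoint of an edge. -/
noncomputable def MGraph.ep1 (G : MGraph) (e : G.E) : G.V :=
  (exists_pair (G.ends e)).choose.1

/-- A chosen second endpoint of an edge. -/
noncomputable def MGraph.ep2 (G : MGraph) (e : G.E) : G.V :=
  (exists_pair (G.ends e)).choose.2

lemma MGraph.ends_ep (G : MGraph) (e : G.E) : G.ends e = s(G.ep1 e, G.ep2 e) :=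
  (exists_pair (G.ends e)).choose_spec

lemma map_inl_not_isDiag {α β : Type} (z : Sym2 α) (hz : ¬ z.IsDiag) :
    ¬ (z.map (Sum.inl : α → α ⊕ β)).IsDiag := by
  induction z using Sym2.ind with
  | _ a b =>
    simp only [Sym2.map_pair_eq, Sym2.mk_isDiag_iff] at *
    exact fun h => hz (by injection h)

/-- The graph obtained from `(G,γ)` by subdividing every even edge exactly once. -/
noncomputable def subdivideEven (G : MGraph) (γ : G.E → ZMod 2) : MGraph where
  V := G.V ⊕ {e : G.E // γ e = 0}
  E := {e : G.E // γ e ≠ 0} ⊕ ({e : G.E // γ e = 0} × Bool)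
  finV := inferInstance
  finE := inferInstance
  ends := fun x =>
    match x with
    | .inl e => (G.ends e.1).map .inl
    | .inr (e, b) => s(.inr e, .inl (if b then G.ep1 e.1 else G.ep2 e.1))
  loopless := fun x => by
    match x with
    | .inl e => exact map_inl_not_isDiag _ (G.loopless e.1)
    | .inr (e, b) =>
      rw [Sym2.mk_isDiag_iff]
      simp

/-- Minimum degree at least `d` (each vertex is incident to at least `d` edges). -/
def minDegreeGE (G : MGraph) (d : ℕ) : Prop :=
  ∀ v : G.V, d ≤ {e : G.E | v ∈ G.ends e}.ncard

/-- The `j`-th vertex of the subdividing path: `u`, then `ℓ` new internal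
vertices, then `v`. -/
def pathVert {α : Type} (u v : α) (ℓ : ℕ) (j : Fin (ℓ + 2)) : α ⊕ Fin ℓ :=
  if h0 : j.1 = 0 then .inl u
  else if h1 : j.1 = ℓ + 1 then .inl v
  else .inr ⟨j.1 - 1, by have := j.2; omega⟩

/-- The graph obtained from `G` by replacing the edge `e₀` (with ends `u,v`) by a
path with `ℓ` internal vertices (hence `ℓ + 1` edges). -/
def replaceEdge (G : MGraph) (e₀ : G.E) (u v : G.V) (h : G.ends e₀ = s(u, v))
    (ℓ : ℕ) : MGraph where
  V := G.V ⊕ Fin ℓ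
  E := {e : G.E // e ≠ e₀} ⊕ Fin (ℓ + 1)
  finV := inferInstance
  finE := inferInstance
  ends := fun x =>
    match x with
    | .inl e => (G.ends e.1).map .inl
    | .inr i => s(pathVert u v ℓ ⟨i.1, by have := i.2; omega⟩,
        pathVert u v ℓ ⟨i.1 + 1, by have := i.2; omega⟩)
  loopless := fun x => by
    match x with
    | .inl e => exact map_inl_not_isDiag _ (G.loopless e.1)
    | .inr i =>
      rw [Sym2.mk_isDiag_iff]
      have huv : u ≠ v := by
        intro hc
        exact G.loopless e₀ (by rw [h, hc]; simp)
      have hi := i.2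
      simp only [pathVert]
      split_ifs <;> (simp_all; try omega)

/-- The signing of `replaceEdge`: old edges keep their sign, the `i`-th path edge
gets sign `δ i`. -/
def replaceGamma {G : MGraph} {e₀ : G.E} {u v : G.V} {h : G.ends e₀ = s(u, v)}
    {ℓ : ℕ} (γ : G.E → ZMod 2) (δ : Fin (ℓ + 1) → ZMod 2) :
    (replaceEdge G e₀ u v h ℓ).E → ZMod 2 :=
  fun x => match x with
  | .inl e => γ e.1
  | .inr i => δ i


/-!
Shifting by `σ : V(G) → ℤ/2` corresponds to colouring the original vertices of `G'` by `σ`.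
An edge of `G` that is even after the shift joins equally coloured vertices if it is even
in `γ` (its subdivision vertex, coloured oppositely, makes both halves bichromatic), and
differently coloured ones if it is odd in `γ`. Hence branch sets connected through even edges
become branch sets connected through bichromatic edges, and the odd model edges of `(H, γ₁)`
become monochromatic edges of `G'` (for an even edge of `γ`, one of its halves).

Conversely, in an odd-minor model in `G'` every branch set contains an original vertex: a
subdivision vertex has degree `2 < 3`. Restricting the branch sets to original vertices and
shifting by the colouring gives back a signed minor model; a bichromatic walk through a
subdivision vertex shortcuts to the underlying edge, which is even after the shift.
-/

open Relation

lemma zmod2_add_add_eq_zero_iff {a b c : ZMod 2} : a + b + c = 0 ↔ (a = 0 ↔ b = c) := by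
  revert a b c; decide

lemma zmod2_add_add_eq_one_iff {a b c : ZMod 2} : a + b + c = 1 ↔ (a = 0 ↔ b ≠ c) := by
  revert a b c; decide

lemma zmod2_eq_of_ne_of_ne {a b c : ZMod 2} (ha : a ≠ c) (hb : b ≠ c) : a = b := by
  revert a b c; decide

lemma zmod2_add_one_ne (a : ZMod 2) : a + 1 ≠ a := by
  revert a; decide

lemma apply_eq_apply_iff_of_sym2_eq {α β : Type*} (f : α → β) {a b x y : α}
    (h : s(a, b) = s(x, y)) : f a = f b ↔ f x = f y := by
  rcases Sym2.eq_iff.mp h with ⟨rfl, rfl⟩ | ⟨rfl, rfl⟩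
  exacts [Iff.rfl, eq_comm]

-- The step relations of `SignedMinorModel.bs_connected` and `OddMinorModel.bs_connected`.
def EvenStep (G : MGraph) (γ : G.E → ZMod 2) (S : Set G.V) (x y : G.V) : Prop :=
  x ∈ S ∧ y ∈ S ∧ ∃ e, γ e = 0 ∧ G.ends e = s(x, y)

def BichromaticStep (G : MGraph) (col : G.V → ZMod 2) (S : Set G.V) (x y : G.V) : Prop :=
  x ∈ S ∧ y ∈ S ∧ col x ≠ col y ∧ ∃ e, G.ends e = s(x, y)

lemma BichromaticStep.symm {G : MGraph} {col : G.V → ZMod 2} {S : Set G.V} {x y : G.V}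
    (h : BichromaticStep G col S x y) : BichromaticStep G col S y x :=
  let ⟨hx, hy, hcol, e, he⟩ := h
  ⟨hy, hx, hcol.symm, e, he.trans Sym2.eq_swap⟩

noncomputable def shiftBy (G : MGraph) (γ : G.E → ZMod 2) (σ : G.V → ZMod 2) : G.E → ZMod 2 :=
  fun e => γ e + σ (G.ep1 e) + σ (G.ep2 e)

lemma shiftBy_of_ends_eq {G : MGraph} {γ : G.E → ZMod 2} {σ : G.V → ZMod 2} {e : G.E}
    {x y : G.V} (h : G.ends e = s(x, y)) : shiftBy G γ σ e = γ e + σ x + σ y := by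
  rcases Sym2.eq_iff.mp ((G.ends_ep e).symm.trans h) with ⟨h1, h2⟩ | ⟨h1, h2⟩ <;>
    simp only [shiftBy, h1, h2]
  exact add_right_comm _ _ _

lemma isShift_shiftBy {G : MGraph} {γ : G.E → ZMod 2} {σ : G.V → ZMod 2} :
    IsShift G γ (shiftBy G γ σ) :=
  ⟨σ, fun _ _ _ => shiftBy_of_ends_eq⟩

section SubdivideEven

variable {G : MGraph} {γ : G.E → ZMod 2}

lemma ite_ep_mem_ends (e : G.E) (b : Bool) :
    (if b then G.ep1 e else G.ep2 e) ∈ G.ends e := by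
  rw [G.ends_ep]
  cases b
  exacts [Sym2.mem_mk_right _ _, Sym2.mem_mk_left _ _]

lemma subdivideEven_ends_inl (e : {e : G.E // γ e ≠ 0}) :
    (subdivideEven G γ).ends (.inl e) = (G.ends e.1).map .inl := rfl

lemma subdivideEven_ends_inl_of_ends_eq {e : {e : G.E // γ e ≠ 0}} {x y : G.V}
    (h : G.ends e.1 = s(x, y)) : (subdivideEven G γ).ends (.inl e) = s(.inl x, .inl y) := by
  rw [subdivideEven_ends_inl, h]
  rfl

lemma subdivideEven_ends_inr (e : {e : G.E // γ e = 0}) (b : Bool) :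
    (subdivideEven G γ).ends (.inr (e, b)) =
      s(.inr e, .inl (if b then G.ep1 e.1 else G.ep2 e.1)) := rfl

lemma subdivideEven_ends_eq_inr {f : (subdivideEven G γ).E} {e : {e : G.E // γ e = 0}}
    {z : (subdivideEven G γ).V} (h : (subdivideEven G γ).ends f = s(.inr e, z)) :
    ∃ b, f = .inr (e, b) ∧ z = .inl (if b then G.ep1 e.1 else G.ep2 e.1) := by
  match f with
  | .inl e' =>
    have hmem : Sum.inr e ∈ (subdivideEven G γ).ends (.inl e') := h ▸ Sym2.mem_mk_left _ _
    obtain ⟨_, -, h⟩ := Sym2.mem_map.mp hmem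
    cases h
  | .inr (e', b) =>
    rcases Sym2.eq_iff.mp h with ⟨h1, h2⟩ | ⟨-, h2⟩
    · cases h1
      exact ⟨b, rfl, h2.symm⟩
    · cases h2

lemma mem_ends_of_subdivideEven_ends_eq {f : (subdivideEven G γ).E}
    {e : {e : G.E // γ e = 0}} {x : G.V}
    (h : (subdivideEven G γ).ends f = s(.inr e, .inl x)) : x ∈ G.ends e.1 := by
  obtain ⟨b, -, hx⟩ := subdivideEven_ends_eq_inr h
  exact Sum.inl_injective hx ▸ ite_ep_mem_ends e.1 b

lemma subdivideEven_ends_ne_inr_inr (f : (subdivideEven G γ).E)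
    (e e' : {e : G.E // γ e = 0}) : (subdivideEven G γ).ends f ≠ s(.inr e, .inr e') := by
  intro h
  obtain ⟨_, -, h⟩ := subdivideEven_ends_eq_inr h
  cases h

lemma subdivideEven_ends_eq_inl_inl {f : (subdivideEven G γ).E} {x y : G.V}
    (h : (subdivideEven G γ).ends f = s(.inl x, .inl y)) :
    ∃ e : {e : G.E // γ e ≠ 0}, f = .inl e ∧ G.ends e.1 = s(x, y) := by
  match f with
  | .inl e => exact ⟨e, rfl, Sym2.map.injective Sum.inl_injective h⟩
  | .inr (e, b) =>
    have hmem : (Sum.inr e : (subdivideEven G γ).V) ∈ s(.inl x, .inl y) :=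
      h ▸ Sym2.mem_mk_left _ _
    rcases Sym2.mem_iff.mp hmem with h | h <;> cases h

lemma exists_subdivideEven_ends_eq {e : {e : G.E // γ e = 0}} {x : G.V}
    (hx : x ∈ G.ends e.1) : ∃ f, (subdivideEven G γ).ends f = s(.inr e, .inl x) := by
  rw [G.ends_ep, Sym2.mem_iff] at hx
  rcases hx with rfl | rfl
  exacts [⟨.inr (e, true), rfl⟩, ⟨.inr (e, false), rfl⟩]

lemma ncard_incidence_inr_le_two (e : {e : G.E // γ e = 0}) :
    {f | Sum.inr e ∈ (subdivideEven G γ).ends f}.ncard ≤ 2 := by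
  have hsub : {f | Sum.inr e ∈ (subdivideEven G γ).ends f} ⊆
      Set.range fun b : Bool => (.inr (e, b) : (subdivideEven G γ).E) := by
    intro f hf
    obtain ⟨z, hz⟩ := Sym2.mem_iff_exists.mp hf
    obtain ⟨b, rfl, -⟩ := subdivideEven_ends_eq_inr hz
    exact ⟨b, rfl⟩
  calc _ ≤ _ := Set.ncard_le_ncard hsub
    _ = Nat.card (Set.range fun b : Bool => (.inr (e, b) : (subdivideEven G γ).E)) :=
      (Nat.card_coe_set_eq _).symm
    _ ≤ Nat.card Bool := Finite.card_range_le _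
    _ = 2 := by simp

def baseEdge : (subdivideEven G γ).E → G.E :=
  Sum.elim Subtype.val fun p => p.1.1

variable (γ) in
noncomputable def liftEdge (e : G.E) : (subdivideEven G γ).E :=
  if h : γ e = 0 then .inr (⟨e, h⟩, true) else .inl ⟨e, h⟩

lemma liftEdge_of_eq_zero {e : G.E} (h : γ e = 0) : liftEdge γ e = .inr (⟨e, h⟩, true) :=
  dif_pos h

lemma liftEdge_of_ne_zero {e : G.E} (h : γ e ≠ 0) : liftEdge γ e = .inl ⟨e, h⟩ :=
  dif_neg h

lemma baseEdge_liftEdge (e : G.E) : baseEdge (liftEdge γ e) = e := by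
  by_cases h : γ e = 0
  · rw [liftEdge_of_eq_zero h]; rfl
  · rw [liftEdge_of_ne_zero h]; rfl

end SubdivideEven

section SignedToOdd

variable {G : MGraph} {γ : G.E → ZMod 2}

variable (γ) in
noncomputable def subdivColoring (σ : G.V → ZMod 2) : (subdivideEven G γ).V → ZMod 2 :=
  Sum.elim σ fun e => σ (G.ep2 e.1) + 1

variable (γ) in
noncomputable def subdivBranchSet (S : Set G.V) : Set (subdivideEven G γ).V :=
  {z | Sum.elim (· ∈ S) (fun e => G.ep2 e.1 ∈ S) z}

/- Both halves of an even edge of `γ` that stays even after the shift are then bichromatic,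
while for one that becomes odd the half at `ep1`, which `liftEdge` picks, is monochromatic. -/

variable {γ' : G.E → ZMod 2} {σ : G.V → ZMod 2} {S : Set G.V}

lemma bichromaticStep_inr_ep2 {e : {e : G.E // γ e = 0}} (he : G.ep2 e.1 ∈ S) :
    BichromaticStep (subdivideEven G γ) (subdivColoring γ σ) (subdivBranchSet γ S)
      (.inr e) (.inl (G.ep2 e.1)) :=
  ⟨he, he, zmod2_add_one_ne _, .inr (e, false), rfl⟩

lemma reflTransGen_bichromaticStep_of_evenStep
    (hσ : ∀ e u v, G.ends e = s(u, v) → γ' e = γ e + σ u + σ v) {x y : G.V}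
    (h : EvenStep G γ' S x y) :
    ReflTransGen (BichromaticStep (subdivideEven G γ) (subdivColoring γ σ)
      (subdivBranchSet γ S)) (.inl x) (.inl y) := by
  obtain ⟨hx, hy, e, he, hends⟩ := h
  have hpar := hσ e x y hends
  rw [he, eq_comm, zmod2_add_add_eq_zero_iff] at hpar
  by_cases hγ : γ e = 0
  · have hσxy : σ x = σ y := hpar.mp hγ
    have hep2 : G.ep2 e = x ∨ G.ep2 e = y :=
      Sym2.mem_iff.mp (hends ▸ G.ends_ep e ▸ Sym2.mem_mk_right _ _)
    let e' : {e : G.E // γ e = 0} := ⟨e, hγ⟩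
    have hmem : Sum.inr e' ∈ subdivBranchSet γ S := by
      rcases hep2 with h | h
      exacts [(h ▸ hx : G.ep2 e ∈ S), (h ▸ hy : G.ep2 e ∈ S)]
    have hcol : subdivColoring γ σ (.inr e') = σ x + 1 := by
      rcases hep2 with h | h <;> simp only [subdivColoring, Sum.elim_inr, e', h, hσxy]
    obtain ⟨f, hf⟩ := exists_subdivideEven_ends_eq (e := e') (hends ▸ Sym2.mem_mk_left x y)
    obtain ⟨g, hg⟩ := exists_subdivideEven_ends_eq (e := e') (hends ▸ Sym2.mem_mk_right x y)
    refine .head ⟨hx, hmem, ?_, f, hf.trans Sym2.eq_swap⟩ (.single ⟨hmem, hy, ?_, g, hg⟩)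
    · rw [hcol]
      exact (zmod2_add_one_ne _).symm
    · rw [hcol, hσxy]
      exact zmod2_add_one_ne _
  · exact .single ⟨hx, hy, mt hpar.mpr hγ, .inl ⟨e, hγ⟩, subdivideEven_ends_inl_of_ends_eq hends⟩

lemma subdivBranchSet_connected
    (hσ : ∀ e u v, G.ends e = s(u, v) → γ' e = γ e + σ u + σ v)
    (hS : ∀ a ∈ S, ∀ b ∈ S, ReflTransGen (EvenStep G γ' S) a b) :
    ∀ p ∈ subdivBranchSet γ S, ∀ q ∈ subdivBranchSet γ S,
      ReflTransGen (BichromaticStep (subdivideEven G γ) (subdivColoring γ σ)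
        (subdivBranchSet γ S)) p q := by
  have down : ∀ p ∈ subdivBranchSet γ S, ∃ x ∈ S,
      ReflTransGen (BichromaticStep (subdivideEven G γ) (subdivColoring γ σ)
        (subdivBranchSet γ S)) p (.inl x) ∧
      ReflTransGen (BichromaticStep (subdivideEven G γ) (subdivColoring γ σ)
        (subdivBranchSet γ S)) (.inl x) p
    | .inl x, hx => ⟨x, hx, .refl, .refl⟩
    | .inr e, he => ⟨_, he, .single (bichromaticStep_inr_ep2 he),
        .single (bichromaticStep_inr_ep2 he).symm⟩
  intro p hp q hq
  obtain ⟨x, hx, hpx, -⟩ := down p hp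
  obtain ⟨y, hy, -, hyq⟩ := down q hq
  have hxy := ReflTransGen.lift' Sum.inl
    (fun _ _ h => reflTransGen_bichromaticStep_of_evenStep hσ h) _ _ (hS x hx y hy)
  exact (hpx.trans hxy).trans hyq

lemma exists_liftEdge_ends {T : Set G.V} {e : G.E} {a b : G.V} (ha : a ∈ S) (hb : b ∈ T)
    (h : G.ends e = s(a, b)) :
    ∃ p ∈ subdivBranchSet γ S, ∃ q ∈ subdivBranchSet γ T,
      (subdivideEven G γ).ends (liftEdge γ e) = s(p, q) := by
  by_cases hγ : γ e = 0
  · rw [liftEdge_of_eq_zero hγ, subdivideEven_ends_inr, if_pos rfl]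
    rcases Sym2.eq_iff.mp ((G.ends_ep e).symm.trans h) with ⟨h1, h2⟩ | ⟨h1, h2⟩
    · exact ⟨.inl a, ha, .inr ⟨e, hγ⟩, (h2 ▸ hb : G.ep2 e ∈ T), by rw [h1]; exact Sym2.eq_swap⟩
    · exact ⟨.inr ⟨e, hγ⟩, (h2 ▸ ha : G.ep2 e ∈ S), .inl b, hb, by rw [h1]⟩
  · rw [liftEdge_of_ne_zero hγ]
    exact ⟨.inl a, ha, .inl b, hb, subdivideEven_ends_inl_of_ends_eq h⟩

lemma subdivColoring_eq_of_liftEdge_ends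
    (hσ : ∀ e u v, G.ends e = s(u, v) → γ' e = γ e + σ u + σ v) {e : G.E} (he : γ' e = 1)
    {p q : (subdivideEven G γ).V} (h : (subdivideEven G γ).ends (liftEdge γ e) = s(p, q)) :
    subdivColoring γ σ p = subdivColoring γ σ q := by
  have hpar := hσ e _ _ (G.ends_ep e)
  rw [he, eq_comm, zmod2_add_add_eq_one_iff] at hpar
  by_cases hγ : γ e = 0
  · rw [liftEdge_of_eq_zero hγ, subdivideEven_ends_inr, if_pos rfl] at h
    refine (apply_eq_apply_iff_of_sym2_eq _ h).mp ?_
    exact zmod2_eq_of_ne_of_ne (zmod2_add_one_ne _) (hpar.mp hγ)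
  · rw [liftEdge_of_ne_zero hγ, subdivideEven_ends_inl_of_ends_eq (G.ends_ep e)] at h
    exact (apply_eq_apply_iff_of_sym2_eq _ h).mp (not_not.mp (mt hpar.mpr hγ))

variable {H : MGraph}

noncomputable def SignedMinorModel.toOddMinorModel (M : SignedMinorModel H G (γ₁ H) γ)
    (hσ : ∀ e u v, G.ends e = s(u, v) → M.γ' e = γ e + σ u + σ v) :
    OddMinorModel H (subdivideEven G γ) where
  bs v := subdivBranchSet γ (M.bs v)
  em eH := liftEdge γ (M.em eH)
  col := subdivColoring γ σ
  bs_nonempty v := let ⟨x, hx⟩ := M.bs_nonempty v; ⟨.inl x, hx⟩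
  bs_disjoint u v huv := Set.disjoint_left.mpr fun
    | .inl _, hu, hv => Set.disjoint_left.mp (M.bs_disjoint u v huv) hu hv
    | .inr _, hu, hv => Set.disjoint_left.mp (M.bs_disjoint u v huv) hu hv
  bs_connected v := subdivBranchSet_connected hσ (M.bs_connected v)
  em_inj e₁ e₂ h := M.em_inj (by simpa only [baseEdge_liftEdge] using congrArg baseEdge h)
  em_ends eH u v h :=
    let ⟨_, ha, _, hb, hab⟩ := M.em_ends eH u v h
    exists_liftEdge_ends ha hb hab
  em_mono eH _ _ := subdivColoring_eq_of_liftEdge_ends hσ (M.em_parity eH)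

end SignedToOdd

section OddToSigned

variable {H G : MGraph} {γ : G.E → ZMod 2}

lemma OddMinorModel.ncard_incidence_le (M : OddMinorModel H G) {v : H.V} {z : G.V}
    (hv : M.bs v ⊆ {z}) : {eH | v ∈ H.ends eH}.ncard ≤ {f | z ∈ G.ends f}.ncard := by
  refine Set.ncard_le_ncard_of_injOn M.em (fun eH heH => ?_) M.em_inj.injOn
  obtain ⟨w, hw⟩ := Sym2.mem_iff_exists.mp heH
  obtain ⟨a, ha, b, -, hab⟩ := M.em_ends eH v w hw
  obtain rfl : a = z := hv ha
  show a ∈ G.ends (M.em eH)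
  rw [hab]
  exact Sym2.mem_mk_left a b

lemma OddMinorModel.exists_mem_bs_of_mem_ends (M : OddMinorModel H G) {eH : H.E} {z : G.V}
    (hz : z ∈ G.ends (M.em eH)) : ∃ v, z ∈ M.bs v := by
  obtain ⟨a, ha, b, hb, hab⟩ := M.em_ends eH _ _ (H.ends_ep eH)
  rcases Sym2.mem_iff.mp (hab ▸ hz) with rfl | rfl
  exacts [⟨_, ha⟩, ⟨_, hb⟩]

variable {col : (subdivideEven G γ).V → ZMod 2} {S : Set (subdivideEven G γ).V}

lemma evenStep_of_bichromaticStep_inl_inl {x y : G.V}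
    (h : BichromaticStep (subdivideEven G γ) col S (.inl x) (.inl y)) :
    EvenStep G (shiftBy G γ (col ∘ Sum.inl)) (Sum.inl ⁻¹' S) x y := by
  obtain ⟨hx, hy, hcol, f, hf⟩ := h
  obtain ⟨e, -, he⟩ := subdivideEven_ends_eq_inl_inl hf
  refine ⟨hx, hy, e.1, ?_, he⟩
  rw [shiftBy_of_ends_eq he, zmod2_add_add_eq_zero_iff]
  exact iff_of_false e.2 hcol

lemma reflTransGen_evenStep_of_bichromaticStep_inl_inr_inl {x y : G.V}
    {e : {e : G.E // γ e = 0}}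
    (h₁ : BichromaticStep (subdivideEven G γ) col S (.inl x) (.inr e))
    (h₂ : BichromaticStep (subdivideEven G γ) col S (.inr e) (.inl y)) :
    ReflTransGen (EvenStep G (shiftBy G γ (col ∘ Sum.inl)) (Sum.inl ⁻¹' S)) x y := by
  obtain ⟨hx, -, hcx, f, hf⟩ := h₁
  obtain ⟨-, hy, hcy, g, hg⟩ := h₂
  rcases eq_or_ne x y with rfl | hxy
  · rfl
  have he : G.ends e.1 = s(x, y) := (Sym2.mem_and_mem_iff hxy).mp
    ⟨mem_ends_of_subdivideEven_ends_eq (hf.trans Sym2.eq_swap),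
      mem_ends_of_subdivideEven_ends_eq hg⟩
  refine .single ⟨hx, hy, e.1, ?_, he⟩
  rw [shiftBy_of_ends_eq he, zmod2_add_add_eq_zero_iff]
  exact iff_of_true e.2 (zmod2_eq_of_ne_of_ne hcx hcy.symm)

lemma reflTransGen_evenStep_of_bichromatic {a b : G.V}
    (h : ReflTransGen (BichromaticStep (subdivideEven G γ) col S) (.inl a) (.inl b)) :
    ReflTransGen (EvenStep G (shiftBy G γ (col ∘ Sum.inl)) (Sum.inl ⁻¹' S)) a b := by
  -- a subdivision vertex on the walk is remembered together with the vertex it was entered from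
  suffices ∀ q, ReflTransGen (BichromaticStep (subdivideEven G γ) col S) (.inl a) q →
      Sum.elim (ReflTransGen (EvenStep G (shiftBy G γ (col ∘ Sum.inl)) (Sum.inl ⁻¹' S)) a)
        (fun e => ∃ x, ReflTransGen (EvenStep G (shiftBy G γ (col ∘ Sum.inl))
          (Sum.inl ⁻¹' S)) a x ∧ BichromaticStep (subdivideEven G γ) col S (.inl x) (.inr e)) q
    from this _ h
  intro q hq
  induction hq with
  | refl => exact .refl
  | @tail p q _ hpq ih =>
    match p, q, hpq, ih with
    | .inl _, .inl _, hpq, ih => exact ih.tail (evenStep_of_bichromaticStep_inl_inl hpq)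
    | .inl x, .inr _, hpq, ih => exact ⟨x, ih, hpq⟩
    | .inr _, .inl _, hpq, ⟨_, hax, hxe⟩ =>
      exact hax.trans (reflTransGen_evenStep_of_bichromaticStep_inl_inr_inl hxe hpq)
    | .inr _, .inr _, ⟨_, _, _, _, hf⟩, _ => exact absurd hf (subdivideEven_ends_ne_inr_inr _ _ _)

namespace OddMinorModel

variable (M : OddMinorModel H (subdivideEven G γ))

lemma bs_subset_singleton_inr {v : H.V} {e : {e : G.E // γ e = 0}}
    (hv : ∀ x, Sum.inl x ∉ M.bs v) (he : Sum.inr e ∈ M.bs v) : M.bs v ⊆ {Sum.inr e} := by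
  intro z hz
  have hpath := M.bs_connected v _ he _ hz
  clear hz
  induction hpath with
  | refl => rfl
  | tail _ hstep ih =>
    obtain ⟨-, hc, -, f, hf⟩ := hstep
    rw [Set.mem_singleton_iff.mp ih] at hf
    obtain ⟨b, -, rfl⟩ := subdivideEven_ends_eq_inr hf
    exact absurd hc (hv _)

lemma exists_inl_mem_bs (hH : minDegreeGE H 3) (v : H.V) : ∃ x, Sum.inl x ∈ M.bs v := by
  by_contra! hv
  obtain ⟨z, hz⟩ := M.bs_nonempty v
  obtain ⟨e, rfl⟩ : ∃ e, z = .inr e := by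
    cases z with
    | inl x => exact absurd hz (hv x)
    | inr e => exact ⟨e, rfl⟩
  have := (hH v).trans ((M.ncard_incidence_le (M.bs_subset_singleton_inr hv hz)).trans
    (ncard_incidence_inr_le_two e))
  omega

lemma exists_bichromaticStep_inr_inl (hH : minDegreeGE H 3) {v : H.V}
    {e : {e : G.E // γ e = 0}} (he : Sum.inr e ∈ M.bs v) :
    ∃ x, BichromaticStep (subdivideEven G γ) M.col (M.bs v) (.inr e) (.inl x) := by
  obtain ⟨z, hz⟩ := M.exists_inl_mem_bs hH v
  rcases (M.bs_connected v _ he _ hz).cases_head with h | ⟨c, hc, -⟩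
  · cases h
  · obtain ⟨b, -, rfl⟩ := subdivideEven_ends_eq_inr hc.2.2.2.choose_spec
    exact ⟨_, hc⟩

lemma exists_ends_of_em_eq_inr (hH : minDegreeGE H 3) {eH : H.E} {e : {e : G.E // γ e = 0}}
    {b : Bool} (hem : M.em eH = .inr (e, b)) {v : H.V} (he : Sum.inr e ∈ M.bs v) :
    ∃ x, Sum.inl x ∈ M.bs v ∧ G.ends e.1 = s(x, if b then G.ep1 e.1 else G.ep2 e.1) ∧
      M.col (.inl x) ≠ M.col (.inl (if b then G.ep1 e.1 else G.ep2 e.1)) := by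
  obtain ⟨x, -, hx, hcol, f, hf⟩ := M.exists_bichromaticStep_inr_inl hH he
  have hmono := M.em_mono eH _ _ (hem ▸ subdivideEven_ends_inr e b)
  have hne := hmono ▸ hcol.symm
  refine ⟨x, hx, (Sym2.mem_and_mem_iff (ne_of_apply_ne (M.col ∘ Sum.inl) hne)).mp
    ⟨mem_ends_of_subdivideEven_ends_eq hf, ite_ep_mem_ends _ _⟩, hne⟩

lemma shiftBy_baseEdge_em (hH : minDegreeGE H 3) (eH : H.E) :
    shiftBy G γ (M.col ∘ Sum.inl) (baseEdge (M.em eH)) = 1 := by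
  rcases hem : M.em eH with e | ⟨e, b⟩
  · have hmono := M.em_mono eH _ _ (hem ▸ subdivideEven_ends_inl_of_ends_eq (G.ends_ep e.1))
    rw [baseEdge, Sum.elim_inl, shiftBy_of_ends_eq (G.ends_ep e.1), zmod2_add_add_eq_one_iff]
    exact iff_of_false e.2 (not_not.mpr hmono)
  · obtain ⟨v, hv⟩ := M.exists_mem_bs_of_mem_ends (z := .inr e)
      (by rw [hem, subdivideEven_ends_inr]; exact Sym2.mem_mk_left _ _)
    obtain ⟨x, -, hends, hne⟩ := M.exists_ends_of_em_eq_inr hH hem hv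
    rw [baseEdge, Sum.elim_inr, shiftBy_of_ends_eq hends, zmod2_add_add_eq_one_iff]
    exact iff_of_true e.2 hne

lemma baseEdge_em_injective (hH : minDegreeGE H 3) : Function.Injective (baseEdge ∘ M.em) := by
  intro e₁ e₂ h
  replace h : baseEdge (M.em e₁) = baseEdge (M.em e₂) := h
  apply M.em_inj
  rcases h₁ : M.em e₁ with a₁ | ⟨a₁, b₁⟩ <;> rcases h₂ : M.em e₂ with a₂ | ⟨a₂, b₂⟩ <;>
    rw [h₁, h₂] at h <;> simp only [baseEdge, Sum.elim_inl, Sum.elim_inr] at h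
  · exact congrArg _ (Subtype.ext h)
  · exact absurd (h ▸ a₂.2) a₁.2
  · exact absurd (h ▸ a₁.2) a₂.2
  obtain rfl := Subtype.ext h
  -- both halves of `a₁` monochromatic would make its ends equally coloured, so `a₁` even
  have hpar := M.shiftBy_baseEdge_em hH e₁
  rw [h₁, baseEdge, Sum.elim_inr, shiftBy, zmod2_add_add_eq_one_iff] at hpar
  have hmono₁ := M.em_mono e₁ _ _ (h₁ ▸ subdivideEven_ends_inr a₁ b₁)
  have hmono₂ := M.em_mono e₂ _ _ (h₂ ▸ subdivideEven_ends_inr a₁ b₂)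
  cases b₁ <;> cases b₂
  all_goals first
    | rfl
    | exact absurd (hmono₁.symm.trans hmono₂) (hpar.mp a₁.2)
    | exact absurd (hmono₂.symm.trans hmono₁) (hpar.mp a₁.2)

lemma exists_baseEdge_em_ends (hH : minDegreeGE H 3) (eH : H.E) (u v : H.V)
    (h : H.ends eH = s(u, v)) :
    ∃ a ∈ Sum.inl ⁻¹' M.bs u, ∃ b ∈ Sum.inl ⁻¹' M.bs v,
      G.ends (baseEdge (M.em eH)) = s(a, b) := by
  obtain ⟨p, hp, q, hq, hpq⟩ := M.em_ends eH u v h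
  rcases hem : M.em eH with e | ⟨e, b⟩ <;> rw [hem] at hpq
  · rw [subdivideEven_ends_inl_of_ends_eq (G.ends_ep e.1)] at hpq
    rcases Sym2.eq_iff.mp hpq with ⟨rfl, rfl⟩ | ⟨rfl, rfl⟩
    exacts [⟨_, hp, _, hq, G.ends_ep e.1⟩, ⟨_, hp, _, hq, (G.ends_ep e.1).trans Sym2.eq_swap⟩]
  · rw [subdivideEven_ends_inr] at hpq
    rcases Sym2.eq_iff.mp hpq with ⟨rfl, rfl⟩ | ⟨rfl, rfl⟩
    · obtain ⟨x, hx, hends, -⟩ := M.exists_ends_of_em_eq_inr hH hem hp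
      exact ⟨x, hx, _, hq, hends⟩
    · obtain ⟨x, hx, hends, -⟩ := M.exists_ends_of_em_eq_inr hH hem hq
      exact ⟨_, hp, x, hx, hends.trans Sym2.eq_swap⟩

noncomputable def toSignedMinorModel (hH : minDegreeGE H 3) : SignedMinorModel H G (γ₁ H) γ where
  γ' := shiftBy G γ (M.col ∘ Sum.inl)
  shift := isShift_shiftBy
  bs v := Sum.inl ⁻¹' M.bs v
  em := baseEdge ∘ M.em
  bs_nonempty := M.exists_inl_mem_bs hH
  bs_disjoint u v huv := (M.bs_disjoint u v huv).preimage _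
  bs_connected v _ ha _ hb := reflTransGen_evenStep_of_bichromatic (M.bs_connected v _ ha _ hb)
  em_inj := M.baseEdge_em_injective hH
  em_ends := M.exists_baseEdge_em_ends hH
  em_parity := M.shiftBy_baseEdge_em hH

end OddMinorModel

end OddToSigned

/-- For `H` of minimum degree 3: `(G,γ)` contains `(H,γ₁)` as a
signed graph minor iff the graph `G'` obtained from `G` by subdividing every even
edge once contains `H` as an odd-minor. -/
theorem statement_6 (H : MGraph) (hH : minDegreeGE H 3) (G : MGraph)
    (γ : G.E → ZMod 2) :
    IsSignedMinor H (γ₁ H) G γ ↔ IsOddMinor H (subdivideEven G γ) := by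
  refine ⟨fun ⟨M⟩ => ?_, fun ⟨M⟩ => ⟨M.toSignedMinorModel hH⟩⟩
  obtain ⟨σ, hσ⟩ := M.shift
  exact ⟨M.toOddMinorModel hσ⟩

end TDMPaper
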